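/- arXiv:1411.6458 — 5 statements merged into one kernel-verified Lean document; each statement's English description precedes it below -/
import Mathlib

section
/- Let H be a nonzero real polynomial of degree d satisfying H(z) = (-1)^n H(-k₀ - z) for all z, where k₀ ≥ 1 is an integer. If at least d - 3 roots of H (counted with multiplicity, in ℂ) lie on the set C = {z ∈ ℂ : Im z = 0 or Re z = -k₀/2}, then all roots of H lie on C. -/
/-!
The roots of `H` in `ℂ` are stable under complex conjugation (`H` is real) and under the
reflection `z ↦ -k₀ - z` (the functional equation holds identically once it holds on `ℝ`).
Both maps preserve the cross, and a root `z` off the cross has four distinct images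
`z, z̄, -k₀ - z, -k₀ - z̄`, all off the cross. That leaves at most `d - 4` roots on the cross.
-/

open Polynomial ComplexConjugate

def cross (a : ℝ) : Set ℂ := {z | z.im = 0 ∨ z.re = a / 2}

theorem aeval_eq_mul_aeval_sub_of_eval_eq {R A : Type*} [CommRing R] [IsDomain R] [Infinite R]
    [CommRing A] [Algebra R A] {p : R[X]} {a s : R} (h : ∀ x, p.eval x = s * p.eval (a - x))
    (x : A) : aeval x p = algebraMap R A s * aeval (algebraMap R A a - x) p := by
  have hp : p = C s * p.comp (C a - X) := Polynomial.funext fun x => by simpa [eval_comp] using h x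
  conv_lhs => rw [hp]
  simp [aeval_comp]

theorem sub_mem_roots_map_of_eval_eq {R K : Type*} [CommRing R] [IsDomain R] [Infinite R]
    [Field K] [Algebra R K] {p : R[X]} {a s : R} (h : ∀ x, p.eval x = s * p.eval (a - x))
    {z : K} (hz : z ∈ (p.map (algebraMap R K)).roots) :
    algebraMap R K a - z ∈ (p.map (algebraMap R K)).roots := by
  have hp : p.map (algebraMap R K) ≠ 0 := ne_zero_of_mem_roots hz
  rw [mem_roots hp, IsRoot, eval_map_algebraMap] at hz ⊢
  rw [aeval_eq_mul_aeval_sub_of_eval_eq h, sub_sub_cancel, hz, mul_zero]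

theorem conj_mem_roots_map {K : Type*} [RCLike K] {p : ℝ[X]} {z : K}
    (hz : z ∈ (p.map (algebraMap ℝ K)).roots) :
    conj z ∈ (p.map (algebraMap ℝ K)).roots := by
  have hp : p.map (algebraMap ℝ K) ≠ 0 := ne_zero_of_mem_roots hz
  rw [mem_roots hp, IsRoot, eval_map_algebraMap] at hz ⊢
  rw [aeval_conj, hz, map_zero]

theorem Multiset.card_filter_add_card_finset_le {α : Type*} {s : Multiset α} {p : α → Prop}
    [DecidablePred p] (t : Finset α) (ht : ∀ x ∈ t, x ∈ s ∧ ¬ p x) :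
    card (s.filter p) + t.card ≤ card s := by
  classical
  have hsub : t ⊆ (s.filter (¬ p ·)).toFinset := fun x hx => by simpa using ht x hx
  calc card (s.filter p) + t.card
      ≤ card (s.filter p) + card (s.filter (¬ p ·)) := by
        gcongr
        exact (Finset.card_le_card hsub).trans (Multiset.toFinset_card_le _)
    _ = card s := by rw [← Multiset.card_add, Multiset.filter_add_not]

theorem conj_mem_cross_iff {a : ℝ} {z : ℂ} : conj z ∈ cross a ↔ z ∈ cross a := by
  simp [cross]

theorem sub_mem_cross_iff {a : ℝ} {z : ℂ} : (a : ℂ) - z ∈ cross a ↔ z ∈ cross a := by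
  simp only [cross, Set.mem_ofPred_eq, Complex.sub_im, Complex.ofReal_im, zero_sub, neg_eq_zero,
    Complex.sub_re, Complex.ofReal_re]
  constructor <;> rintro (h | h) <;> first | exact .inl h | (right; linarith)

theorem card_conj_reflect_orbit {a : ℝ} {z : ℂ} (hz : z ∉ cross a) :
    ({z, conj z, a - z, a - conj z} : Finset ℂ).card = 4 := by
  simp only [cross, Set.mem_ofPred_eq, not_or] at hz
  obtain ⟨him, hre⟩ := hz
  have him' : z.im ≠ -z.im := fun h => him (by linarith)
  have hre' : a - z.re ≠ z.re := fun h => hre (by linarith)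
  rw [Finset.card_insert_of_notMem, Finset.card_insert_of_notMem, Finset.card_pair] <;>
    simp [Complex.ext_iff, him', hre'.symm]

open Classical in
theorem stmt1_general (H : Polynomial ℝ) (n : ℕ) (k₀ : ℤ)
    (hsym : ∀ z : ℝ, H.eval z = (-1) ^ n * H.eval (-(k₀ : ℝ) - z))
    (hroots : H.natDegree - 3 ≤
      Multiset.card (((H.map (algebraMap ℝ ℂ)).roots).filter
        (fun z => z.im = 0 ∨ z.re = -(k₀ : ℝ) / 2))) :
    ∀ z ∈ (H.map (algebraMap ℝ ℂ)).roots, z.im = 0 ∨ z.re = -(k₀ : ℝ) / 2 := by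
  intro z hz
  by_contra hzC
  set a : ℝ := -k₀
  change z ∉ cross a at hzC
  have hrefl {w : ℂ} (hw : w ∈ (H.map (algebraMap ℝ ℂ)).roots) :
      (a : ℂ) - w ∈ (H.map (algebraMap ℝ ℂ)).roots :=
    sub_mem_roots_map_of_eval_eq hsym hw
  have horbit := Multiset.card_filter_add_card_finset_le (p := fun w => w.im = 0 ∨ w.re = a / 2)
      {z, conj z, a - z, a - conj z} <| by
    simp only [Finset.mem_insert, Finset.mem_singleton]
    rintro w (rfl | rfl | rfl | rfl)
    · exact ⟨hz, hzC⟩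
    · exact ⟨conj_mem_roots_map hz, conj_mem_cross_iff.not.2 hzC⟩
    · exact ⟨hrefl hz, sub_mem_cross_iff.not.2 hzC⟩
    · exact ⟨hrefl (conj_mem_roots_map hz),
        sub_mem_cross_iff.not.2 (conj_mem_cross_iff.not.2 hzC)⟩
  rw [card_conj_reflect_orbit hzC,
    IsAlgClosed.card_roots_map_eq_natDegree_of_injective _ (algebraMap ℝ ℂ).injective] at horbit
  omega

open Classical in
theorem stmt1 (H : Polynomial ℝ) (hH : H ≠ 0) (hd : 0 < H.natDegree) (n : ℕ) (k₀ : ℤ)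
    (hk : 1 ≤ k₀)
    (hsym : ∀ z : ℝ, H.eval z = (-1) ^ n * H.eval (-(k₀ : ℝ) - z))
    (hroots : H.natDegree - 3 ≤
      Multiset.card (((H.map (algebraMap ℝ ℂ)).roots).filter
        (fun z => z.im = 0 ∨ z.re = -(k₀ : ℝ) / 2))) :
    ∀ z ∈ (H.map (algebraMap ℝ ℂ)).roots, z.im = 0 ∨ z.re = -(k₀ : ℝ) / 2 :=
  stmt1_general H n k₀ hsym hroots
end

section
/- Let H be a nonzero real polynomial satisfying H(z) = (-1)^n H(-k₀-z) for all z, H(-j) = 0 for j = 1, …, k₀-1, where k₀ ≥ 1, and suppose n ≡ k₀ ≡ 0 (mod 2). Then -k₀/2 is a root of H of multiplicity at least 2. -/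
open Polynomial

namespace Polynomial

variable {R : Type*} [CommRing R] [IsDomain R] [CharZero R]

theorem comp_reflect_eq_self {p : R[X]} {a : R} (hsymm : ∀ z, p.eval (2 * a - z) = p.eval z) :
    p.comp (C (2 * a) - X) = p :=
  Polynomial.funext fun z => by simpa only [eval_comp, eval_sub, eval_C, eval_X] using hsymm z

/-- The derivative of a polynomial symmetric about `a` is antisymmetric about `a`. -/
theorem derivative_eval_eq_zero_of_symmetric {p : R[X]} {a : R}
    (hsymm : ∀ z, p.eval (2 * a - z) = p.eval z) : p.derivative.eval a = 0 := by
  have hanti : p.derivative = -(p.derivative.comp (C (2 * a) - X)) := by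
    conv_lhs => rw [← comp_reflect_eq_self hsymm]
    simp [derivative_comp, mul_comm]
  have hself : 2 * p.derivative.eval a = 0 := by
    have := congrArg (eval a) hanti
    simp only [eval_neg, eval_comp, eval_sub, eval_C, eval_X, show 2 * a - a = a by ring] at this
    linear_combination this
  simpa using hself

theorem one_lt_rootMultiplicity_of_symmetric {p : R[X]} {a : R} (hp : p ≠ 0) (hroot : p.IsRoot a)
    (hsymm : ∀ z, p.eval (2 * a - z) = p.eval z) : 1 < p.rootMultiplicity a :=
  (one_lt_rootMultiplicity_iff_isRoot hp).2 ⟨hroot, derivative_eval_eq_zero_of_symmetric hsymm⟩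

end Polynomial

theorem stmt3 (H : Polynomial ℝ) (hH : H ≠ 0) (n : ℕ) (k₀ : ℤ) (hk : 1 ≤ k₀)
    (hn : Even n) (hk₀ : Even k₀)
    (hsym : ∀ z : ℝ, H.eval z = (-1) ^ n * H.eval (-(k₀ : ℝ) - z))
    (hzero : ∀ j : ℤ, 1 ≤ j → j ≤ k₀ - 1 → H.eval (-(j : ℝ)) = 0) :
    2 ≤ H.rootMultiplicity (-(k₀ : ℝ) / 2) := by
  obtain ⟨m, rfl⟩ := hk₀
  have hcentre : -((m + m : ℤ) : ℝ) / 2 = -(m : ℝ) := by push_cast; ring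
  rw [hcentre]
  have hroot : H.IsRoot (-(m : ℝ)) := hzero m (by omega) (by omega)
  have hsymm : ∀ z, H.eval (2 * -(m : ℝ) - z) = H.eval z := fun z => by
    rw [hsym z, hn.neg_one_pow, one_mul]
    push_cast
    ring_nf
  exact one_lt_rootMultiplicity_of_symmetric hH hroot hsymm
end

section
/- (Popoviciu symmetry, one direction) Let H be a real polynomial of degree m and let P(t) = Σ_{k≥0} H(k) t^k be the generating function of its values at natural numbers, viewed as a rational function P(t) = U(t)/(1-t)^{m+1}. If k₀ ≥ 1, H(-1) = H(-2) = ⋯ = H(-k₀+1) = 0, and H(k) = (-1)^m H(-k₀-k) for all integers k, then P(t⁻¹) = (-1)^{m+1} t^{k₀} P(t) as rational functions. -/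
/-!
Write `u_j` for the coefficients of `U = P(t) (1 - t)^(m+1)`. Then `u_j` is the `(m+1)`-st backward
difference of `H` at `j`, with the values of `H` at negative integers dropped. Since `deg H ≤ m` the
full difference vanishes, so `u_j` is minus the dropped part, which only involves
`H(-1), H(-2), …`. The zeros of `H` at `-1, …, -(k₀-1)` kill `u_j` for `j ≥ m + 2 - k₀`, and the
symmetry `H(-k₀-l) = (-1)^m H(l)` turns the dropped part of `u_b` into `u_a` when
`a + b + k₀ = m + 1`. Hence the reflection of `U` is `X^k₀ U`, i.e.
`t^(m+1) U(1/t) = t^k₀ U(t)`.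
-/

open Polynomial Finset

namespace Polynomial

theorem alternating_sum_choose_mul_eval_sub_eq_zero {R : Type*} [CommRing R] (P : R[X]) {N : ℕ}
    (hP : P.natDegree < N) (x : R) :
    ∑ i ∈ range (N + 1), (-1) ^ i * (N.choose i : R) * P.eval (x - i) = 0 := by
  have h := congrFun (fwdDiff_iter_eq_zero_of_degree_lt hP) (x - N)
  rw [Pi.zero_apply, fwdDiff_iter_eq_sum_shift, ← sum_range_reflect] at h
  rw [← h]
  refine sum_congr rfl fun i hi => ?_
  have hi : i ≤ N := Nat.lt_succ_iff.mp (mem_range.mp hi)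
  rw [Nat.add_sub_cancel, Nat.sub_sub_self hi, Nat.choose_symm hi, nsmul_one, Nat.cast_sub hi,
    zsmul_eq_mul]
  push_cast
  ring_nf

theorem reflect_eq_X_pow_mul {R : Type*} [Semiring R] {U : R[X]} {m d : ℕ}
    (hvanish : ∀ j, m + 1 ≤ j + d → U.coeff j = 0)
    (hsymm : ∀ a b, a + b + d = m → U.coeff a = U.coeff b) :
    reflect (m + 1) U = X ^ (d + 1) * U := by
  ext n
  rw [coeff_reflect, coeff_X_pow_mul']
  by_cases hn : n ≤ m + 1
  · rw [revAt_le hn]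
    split_ifs with hd
    · exact hsymm _ _ (by omega)
    · exact hvanish _ (by omega)
  · rw [← revAtFun_eq, revAtFun, if_neg hn, hvanish n (by omega)]
    split_ifs
    · exact (hvanish _ (by omega)).symm
    · rfl

theorem eval_inv_mul_pow_eq_eval_reflect {K : Type*} [Field K] {f : K[X]} {N : ℕ}
    (hf : f.natDegree ≤ N) {t : K} (ht : t ≠ 0) :
    f.eval t⁻¹ * t ^ N = (reflect N f).eval t := by
  let := invertibleOfNonzero (inv_ne_zero ht)
  have h := eval₂_reflect_mul_pow (RingHom.id K) t⁻¹ N f hf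
  rw [invOf_eq_inv, inv_inv] at h
  rw [← eval₂_id, ← h, eval₂_id, mul_assoc, ← mul_pow, inv_mul_cancel₀ ht, one_pow, mul_one]

end Polynomial

namespace PowerSeries

variable {R : Type*} [CommRing R]

theorem coeff_one_sub_X_pow (N q : ℕ) :
    coeff q ((1 - X : R⟦X⟧) ^ N) = (-1) ^ q * N.choose q := by
  have hterm (i : ℕ) : (-X : R⟦X⟧) ^ i * (N.choose i : R⟦X⟧) =
      C ((-1 : R) ^ i * N.choose i) * X ^ i := by
    simp only [neg_pow X, map_mul, map_pow, map_neg, map_one, map_natCast]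
    ring
  rw [sub_eq_add_neg, add_comm, add_pow, map_sum]
  simp_rw [one_pow, mul_one, hterm, coeff_C_mul_X_pow]
  rw [sum_ite_eq]
  split_ifs with h
  · rfl
  · rw [Nat.choose_eq_zero_of_lt (by simpa using h)]; simp

theorem coeff_mk_mul_one_sub_X_pow (f : ℕ → R) (N j : ℕ) :
    coeff j (mk f * (1 - X) ^ N) = ∑ i ∈ range (j + 1), (-1) ^ i * N.choose i * f (j - i) := by
  rw [mul_comm, coeff_mul, Nat.sum_antidiagonal_eq_sum_range_succ
    (fun p q => coeff p ((1 - X : R⟦X⟧) ^ N) * coeff q (mk f))]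
  simp only [coeff_one_sub_X_pow, coeff_mk]

end PowerSeries

section Popoviciu

variable {R : Type*} [CommRing R] {H U : R[X]} {m d : ℕ}

theorem coeff_eq_sum_eval
    (hgen : (PowerSeries.mk fun k => H.eval (k : R)) * (1 - PowerSeries.X) ^ (m + 1) =
      (U : PowerSeries R)) (j : ℕ) :
    U.coeff j = ∑ i ∈ range (j + 1), (-1) ^ i * ((m + 1).choose i : R) * H.eval ((j : R) - i) := by
  rw [← coeff_coe, ← hgen, PowerSeries.coeff_mk_mul_one_sub_X_pow]
  refine sum_congr rfl fun i hi => ?_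
  rw [Nat.cast_sub (Nat.lt_succ_iff.mp (mem_range.mp hi))]

theorem coeff_eq_neg_sum_eval_neg (hm : H.natDegree ≤ m)
    (hgen : (PowerSeries.mk fun k => H.eval (k : R)) * (1 - PowerSeries.X) ^ (m + 1) =
      (U : PowerSeries R)) {j n : ℕ} (hn : m + 1 ≤ j + n) :
    U.coeff j = -∑ k ∈ range n,
      (-1) ^ (j + 1 + k) * ((m + 1).choose (j + 1 + k) : R) * H.eval (-((k : R) + 1)) := by
  have hfull := H.alternating_sum_choose_mul_eval_sub_eq_zero (Nat.lt_add_one_of_le hm) (j : R)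
  rw [sum_subset (range_subset_range.mpr (show m + 1 + 1 ≤ j + 1 + n by omega)) fun i _ hi => by
    rw [Nat.choose_eq_zero_of_lt (by simpa using hi)]; simp, sum_range_add] at hfull
  rw [coeff_eq_sum_eval hgen, eq_neg_iff_add_eq_zero, ← hfull]
  congr 1
  refine sum_congr rfl fun k _ => ?_
  push_cast
  ring_nf

theorem coeff_eq_zero_of_eval_neg_eq_zero (hm : H.natDegree ≤ m)
    (hgen : (PowerSeries.mk fun k => H.eval (k : R)) * (1 - PowerSeries.X) ^ (m + 1) =
      (U : PowerSeries R)) (hzero : ∀ k < d, H.eval (-((k : R) + 1)) = 0) {j : ℕ}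
    (hj : m + 1 ≤ j + d) : U.coeff j = 0 := by
  rw [coeff_eq_neg_sum_eval_neg hm hgen hj, sum_eq_zero fun k hk => by
    rw [hzero k (mem_range.mp hk), mul_zero], neg_zero]

theorem coeff_eq_coeff_of_eval_symm (hm : H.natDegree ≤ m)
    (hgen : (PowerSeries.mk fun k => H.eval (k : R)) * (1 - PowerSeries.X) ^ (m + 1) =
      (U : PowerSeries R)) (hzero : ∀ k < d, H.eval (-((k : R) + 1)) = 0)
    (hsym : ∀ l : ℕ, H.eval (-((d : R) + 1 + l)) = (-1) ^ m * H.eval (l : R)) {a b : ℕ}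
    (hab : a + b + d = m) : U.coeff a = U.coeff b := by
  rw [coeff_eq_neg_sum_eval_neg hm hgen (j := b) (n := d + (a + 1)) (by omega), sum_range_add,
    sum_eq_zero fun k hk => by rw [hzero k (mem_range.mp hk), mul_zero], zero_add,
    coeff_eq_sum_eval hgen, ← sum_range_reflect, ← sum_neg_distrib]
  refine sum_congr rfl fun i hi => ?_
  have hi : i ≤ a := Nat.lt_succ_iff.mp (mem_range.mp hi)
  have hsign : (-1 : R) ^ (m + 1 - (a - i)) * (-1) ^ m = -(-1) ^ (a - i) := by
    rw [← pow_add, show m + 1 - (a - i) + m = 2 * (m - (a - i)) + (a - i) + 1 by omega,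
      pow_add, pow_add, pow_mul]
    norm_num
  rw [Nat.add_sub_cancel, Nat.cast_sub hi, sub_sub_cancel,
    show b + 1 + (d + i) = m + 1 - (a - i) by omega, ← Nat.choose_symm (by omega),
    show -(((d + i : ℕ) : R) + 1) = -((d : R) + 1 + i) by push_cast; ring, hsym]
  linear_combination ((m + 1).choose (m + 1 - (a - i)) * H.eval (i : R)) * hsign

end Popoviciu

theorem stmt7 (H U : Polynomial ℝ) (m : ℕ) (hm : H.natDegree = m) (k₀ : ℤ) (hk : 1 ≤ k₀)
    (hgen : (PowerSeries.mk fun k => H.eval (k : ℝ)) * (1 - PowerSeries.X) ^ (m + 1) =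
      (U : PowerSeries ℝ))
    (hzero : ∀ j : ℤ, 1 ≤ j → j ≤ k₀ - 1 → H.eval (-(j : ℝ)) = 0)
    (hsym : ∀ k : ℤ, H.eval (k : ℝ) = (-1) ^ m * H.eval (-(k₀ : ℝ) - (k : ℝ))) :
    ∀ t : ℝ, t ≠ 0 → t ≠ 1 →
      U.eval t⁻¹ / (1 - t⁻¹) ^ (m + 1) =
        (-1) ^ (m + 1) * t ^ k₀ * (U.eval t / (1 - t) ^ (m + 1)) := by
  obtain ⟨d, rfl⟩ : ∃ d : ℕ, k₀ = d + 1 := ⟨(k₀ - 1).toNat, by omega⟩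
  have hzero' (k : ℕ) (hkd : k < d) : H.eval (-((k : ℝ) + 1)) = 0 := by
    simpa using hzero (k + 1) (by omega) (by omega)
  have hsym' (l : ℕ) : H.eval (-((d : ℝ) + 1 + l)) = (-1) ^ m * H.eval (l : ℝ) := by
    have h := hsym (-((d : ℤ) + 1 + l))
    push_cast at h
    rw [h]
    ring_nf
  have hvanish := fun j => coeff_eq_zero_of_eval_neg_eq_zero hm.le hgen hzero' (j := j)
  have hreflect : reflect (m + 1) U = X ^ (d + 1) * U :=
    reflect_eq_X_pow_mul hvanish fun a b => coeff_eq_coeff_of_eval_symm hm.le hgen hzero' hsym'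
  have hdeg : U.natDegree ≤ m + 1 :=
    natDegree_le_iff_coeff_eq_zero.mpr fun j hj => hvanish j (by omega)
  intro t ht ht1
  have heval := eval_inv_mul_pow_eq_eval_reflect hdeg ht
  rw [hreflect, eval_mul, eval_X_pow] at heval
  have h1t : 1 - t ≠ 0 := sub_ne_zero.mpr (Ne.symm ht1)
  have hinv : 1 - t⁻¹ = -(1 - t) / t := by field_simp; ring
  rw [show ((d : ℤ) + 1) = ((d + 1 : ℕ) : ℤ) by push_cast; ring, zpow_natCast, hinv, div_pow,
    neg_pow]
  field_simp
  rw [one_div, heval, pow_right_comm, neg_one_sq, one_pow, one_mul]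
end

section
/- Suppose n ≥ 2, N₀ ∈ ℝ, and H(z) = (2N₀/n!)(z + n/2)∏_{j=1}^{n-1}(z+j). If C, D ∈ ℝ satisfy: leading coefficient of H equals C/(nⁿ n!) and the coefficient of z^{n-2} equals (C+D)/(12 n^{n-2}(n-2)!), then C = 2N₀ nⁿ and D = N₀ n^{n-2}(n² - n + 2). -/
/-! By Vieta, the coefficient of `X ^ (card s - k)` in `∏_{r ∈ s} (X + r)` is the elementary
symmetric function `e_k(s)`. Here `s = {1, …, n - 1, n / 2}`, so the coefficients of `X ^ n` and
`X ^ (n - 2)` in `H` are `2N₀/n!` and `(2N₀/n!) · σ₂(s)` with `σ₂(s) = n(n-1)(3n²-n+2)/24`, which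
follows from `e_{k+1}(a ::ₘ s) = e_{k+1}(s) + a e_k(s)`. The two hypotheses are then linear
equations for `C` and `C + D`. -/

open Polynomial

namespace Multiset

variable {R : Type*} [CommSemiring R]

theorem esymm_zero (s : Multiset R) : s.esymm 0 = 1 := by
  simp [esymm]

theorem esymm_cons_succ (a : R) (s : Multiset R) (k : ℕ) :
    (a ::ₘ s).esymm (k + 1) = s.esymm (k + 1) + a * s.esymm k := by
  simp [esymm, map_map, sum_map_mul_left]

end Multiset

section IccCast

open Multiset

variable {R : Type*}

theorem Finset.Icc_one_succ_val_map_cast [AddMonoidWithOne R] (m : ℕ) :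
    (Finset.Icc 1 (m + 1)).val.map (Nat.cast : ℕ → R) =
      ((m + 1 : ℕ) : R) ::ₘ (Finset.Icc 1 m).val.map Nat.cast := by
  rw [← Finset.insert_Icc_right_eq_Icc_add_one (by omega),
    Finset.insert_val_of_notMem (by simp), Multiset.map_cons]

theorem two_mul_esymm_one_Icc_cast [CommSemiring R] (m : ℕ) :
    2 * ((Finset.Icc 1 m).val.map (Nat.cast : ℕ → R)).esymm 1 = m * (m + 1) := by
  induction m with
  | zero => simp [esymm, powersetCard_one]
  | succ m ih =>
    rw [Finset.Icc_one_succ_val_map_cast, esymm_cons_succ, esymm_zero, mul_add, ih]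
    push_cast
    ring

theorem twentyFour_mul_esymm_two_Icc_cast [CommRing R] (m : ℕ) :
    24 * ((Finset.Icc 1 m).val.map (Nat.cast : ℕ → R)).esymm 2 =
      (m - 1) * m * (m + 1) * (3 * m + 2) := by
  induction m with
  | zero => simp [esymm, powersetCard_zero_right]
  | succ m ih =>
    rw [Finset.Icc_one_succ_val_map_cast, esymm_cons_succ]
    push_cast
    linear_combination ih + 12 * ((m : R) + 1) * two_mul_esymm_one_Icc_cast (R := R) m

theorem esymm_two_cons_half_Icc_cast {K : Type*} [Field K] [CharZero K] (n : ℕ) :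
    ((n / 2 : K) ::ₘ (Finset.Icc 1 (n - 1)).val.map (Nat.cast : ℕ → K)).esymm 2 =
      n * (n - 1) * (3 * n ^ 2 - n + 2) / 24 := by
  cases n with
  | zero => simp [esymm]
  | succ m =>
    rw [esymm_cons_succ, Nat.add_sub_cancel]
    push_cast
    linear_combination (1 / 24 : K) * twentyFour_mul_esymm_two_Icc_cast (R := K) m +
      ((m : K) + 1) / 4 * two_mul_esymm_one_Icc_cast (R := K) m

end IccCast

theorem Nat.cast_factorial_eq_mul_sub_one_mul_factorial_sub_two {R : Type*} [CommRing R] {n : ℕ}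
    (hn : 2 ≤ n) : (n.factorial : R) = n * (n - 1) * (n - 2).factorial := by
  obtain ⟨m, rfl⟩ : ∃ m, n = m + 2 := ⟨n - 2, by omega⟩
  simp only [Nat.factorial_succ, Nat.cast_mul, Nat.cast_add, Nat.cast_one, Nat.cast_ofNat,
    add_tsub_cancel_right]
  ring

theorem stmt12 (n : ℕ) (hn : 2 ≤ n) (N₀ C D : ℝ) (H : Polynomial ℝ)
    (hHdef : H = Polynomial.C (2 * N₀ / n.factorial) * (X + Polynomial.C ((n : ℝ) / 2)) *
      ∏ j ∈ Finset.Icc 1 (n - 1), (X + Polynomial.C (j : ℝ)))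
    (hC : H.coeff n = C / ((n : ℝ) ^ n * n.factorial))
    (hD : H.coeff (n - 2) = (C + D) / (12 * (n : ℝ) ^ (n - 2) * (n - 2).factorial)) :
    C = 2 * N₀ * (n : ℝ) ^ n ∧ D = N₀ * (n : ℝ) ^ (n - 2) * ((n : ℝ) ^ 2 - (n : ℝ) + 2) := by
  set s : Multiset ℝ := (n / 2 : ℝ) ::ₘ (Finset.Icc 1 (n - 1)).val.map Nat.cast
  have hcard : Multiset.card s = n := by 
    simp only [s, Multiset.card_cons, Multiset.card_map, Finset.card_val, Nat.card_Icc]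
    omega
  have hH :
      H = Polynomial.C (2 * N₀ / n.factorial) * (s.map fun r => X + Polynomial.C r).prod := by
    rw [hHdef, Finset.prod_eq_multiset_prod, Multiset.map_cons, Multiset.prod_cons,
      Multiset.map_map, mul_assoc]
    rfl
  have hlead : H.coeff n = 2 * N₀ / n.factorial := by
    rw [hH, coeff_C_mul, Multiset.prod_X_add_C_coeff _ hcard.ge, hcard, Nat.sub_self,
      Multiset.esymm_zero, mul_one]
  have hsub : H.coeff (n - 2) =
      2 * N₀ / n.factorial * (n * (n - 1) * (3 * n ^ 2 - n + 2) / 24) := by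
    rw [hH, coeff_C_mul, Multiset.prod_X_add_C_coeff _ (by omega), hcard,
      show n - (n - 2) = 2 by omega, esymm_two_cons_half_Icc_cast]
  have hn1 : (n : ℝ) - 1 ≠ 0 := sub_ne_zero.mpr (by exact_mod_cast (by omega : n ≠ 1))
  have hCval : C = 2 * N₀ * (n : ℝ) ^ n := by
    rw [hlead] at hC
    field_simp at hC
    linarith
  refine ⟨hCval, ?_⟩
  rw [hsub, Nat.cast_factorial_eq_mul_sub_one_mul_factorial_sub_two hn, hCval,
    ← pow_mul_pow_sub _ hn] at hD
  field_simp at hD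
  linear_combination -hD / 24
end

section
/- Let n ≥ 2, N₀ ≠ 0 real, b ∈ ℝ, and let H be the real polynomial of degree n determined by the generating function identity Σ_{k≥0} H(k)t^k = N₀(1 + b t + t²)/(1-t)^{n+1}. If C, D are defined by: leading coefficient of H equals C/((n-1)ⁿ n!) and coefficient of z^{n-2} equals (C+D)/(12(n-1)^{n-2}(n-2)!), then C = N₀(b+2)(n-1)ⁿ and D = N₀(n-1)^{n-2}(12 + (b+2)n(n-3)/2). Consequently D - (n(n-3)/(2(n-1)²))·C = 12 N₀ (n-1)^{n-2}. -/
/-!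
Writing `n = m + 2`, each binomial `C(k + j, n)` is `1/n!` times the shifted falling factorial
`(X + j)(X + j - 1)⋯(X + j - n + 1)` evaluated at `k`, so `H` agrees on all of `ℕ`, hence
everywhere, with `N₀/n!` times the sum of three such polynomials. Their top coefficient is `1`
and their coefficient of `X^(n-2)` is an explicit quadratic in the shift `j`, found by induction
on the number of factors; the formulas for `C` and `D` are then algebra.
-/

open Polynomial Nat

theorem descPochhammer_succ_comp_X_add_C {R : Type*} [CommRing R] (N : ℕ) (c : R) :
    (descPochhammer R (N + 1)).comp (X + C c) =
      (descPochhammer R N).comp (X + C c) * (X - C ((N : R) - c)) := by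
  rw [descPochhammer_succ_right, mul_comp, sub_comp, X_comp, natCast_comp, map_sub,
    ← C_eq_natCast]
  ring

theorem coeff_descPochhammer_comp_X_add_C_self {R : Type*} [CommRing R] [IsDomain R]
    (N : ℕ) (c : R) : ((descPochhammer R N).comp (X + C c)).coeff N = 1 := by
  have hdeg : ((descPochhammer R N).comp (X + C c)).natDegree = N := by
    rw [natDegree_comp, descPochhammer_natDegree, natDegree_X_add_C, mul_one]
  simpa only [hdeg] using ((monic_descPochhammer R N).comp_X_add_C c).coeff_natDegree

theorem Polynomial.eq_of_eval_natCast_eq {R : Type*} [CommRing R] [IsDomain R] [CharZero R]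
    {p q : R[X]} (h : ∀ k : ℕ, p.eval (k : R) = q.eval (k : R)) : p = q :=
  eq_of_infinite_eval_eq p q <|
    (Set.infinite_range_of_injective Nat.cast_injective).mono (Set.range_subset_iff.2 h)

section

variable {K : Type*} [Field K]

/-- `(n! / N₀) • H`: the polynomial `p` with `∑ₖ p(k) tᵏ = n! (1 + b t + t²) / (1 - t)ⁿ⁺¹`. -/
noncomputable def scaledHilbertPoly (n : ℕ) (b : K) : K[X] :=
  (descPochhammer K n).comp (X + C ((n : K) - 2)) +
    C b * (descPochhammer K n).comp (X + C ((n : K) - 1)) +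
      (descPochhammer K n).comp (X + C (n : K))

theorem coeff_scaledHilbertPoly_self (n : ℕ) (b : K) :
    (scaledHilbertPoly n b).coeff n = b + 2 := by
  simp only [scaledHilbertPoly, coeff_add, coeff_C_mul, coeff_descPochhammer_comp_X_add_C_self]
  ring

variable [CharZero K]

theorem coeff_descPochhammer_succ_comp_X_add_C (N : ℕ) (c : K) :
    ((descPochhammer K (N + 1)).comp (X + C c)).coeff N = (N + 1) * c - (N + 1) * N / 2 := by
  induction N with
  | zero => simp
  | succ N ih =>
    rw [descPochhammer_succ_comp_X_add_C, coeff_mul_X_sub_C, ih,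
      coeff_descPochhammer_comp_X_add_C_self]
    push_cast
    ring

theorem coeff_descPochhammer_add_two_comp_X_add_C (N : ℕ) (c : K) :
    ((descPochhammer K (N + 2)).comp (X + C c)).coeff N =
      (N + 2) * (N + 1) / 2 * c ^ 2 - (N + 1) ^ 2 * (N + 2) / 2 * c
        + N * (N + 1) * (N + 2) * (3 * N + 5) / 24 := by
  induction N with
  | zero =>
    rw [descPochhammer_succ_comp_X_add_C, descPochhammer_one, X_comp, coeff_zero_eq_eval_zero]
    simp
    ring
  | succ N ih =>
    rw [descPochhammer_succ_comp_X_add_C, coeff_mul_X_sub_C, ih,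
      coeff_descPochhammer_succ_comp_X_add_C]
    push_cast
    ring

theorem cast_add_choose_eq_eval_descPochhammer_comp (n j k : ℕ) :
    ((k + j).choose n : K) = ((descPochhammer K n).comp (X + C (j : K))).eval (k : K) / n ! := by
  rw [cast_choose_eq_descPochhammer_div, eval_comp]
  simp

theorem eval_scaledHilbertPoly (m k : ℕ) (b : K) :
    (scaledHilbertPoly (m + 2) b).eval (k : K) = (m + 2)! *
      (((m + 2 + k - 2).choose (m + 2) : K) + b * ((m + 2 + k - 1).choose (m + 2) : K) +
        ((m + 2 + k).choose (m + 2) : K)) := by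
  have hshift₀ : ((m + 2 : ℕ) : K) - 2 = (m : ℕ) := by push_cast; ring
  have hshift₁ : ((m + 2 : ℕ) : K) - 1 = (m + 1 : ℕ) := by push_cast; ring
  rw [show m + 2 + k - 2 = k + m by omega, show m + 2 + k - 1 = k + (m + 1) by omega,
    add_comm (m + 2) k]
  simp only [scaledHilbertPoly, hshift₀, hshift₁, cast_add_choose_eq_eval_descPochhammer_comp,
    eval_add, eval_mul, eval_C]
  have : ((m + 2)! : K) ≠ 0 := Nat.cast_ne_zero.2 (factorial_ne_zero _)
  field_simp

theorem coeff_scaledHilbertPoly_sub_two (m : ℕ) (b : K) :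
    (scaledHilbertPoly (m + 2) b).coeff m =
      (b + 2) * (m * (m + 1) * (m + 2) * (3 * m + 5) / 24) + (m + 1) * (m + 2) := by
  simp only [scaledHilbertPoly, coeff_add, coeff_C_mul, coeff_descPochhammer_add_two_comp_X_add_C]
  push_cast
  ring

end

theorem stmt13_general (n : ℕ) (hn : 2 ≤ n) (N₀ b C D : ℝ) (H : Polynomial ℝ)
    (hH : ∀ k : ℕ, H.eval (k : ℝ) =
      N₀ * (((n + k - 2).choose n : ℝ) + b * ((n + k - 1).choose n : ℝ) + ((n + k).choose n : ℝ)))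
    (hC : H.coeff n = C / (((n : ℝ) - 1) ^ n * n.factorial))
    (hD : H.coeff (n - 2) = (C + D) / (12 * ((n : ℝ) - 1) ^ (n - 2) * (n - 2).factorial)) :
    C = N₀ * (b + 2) * ((n : ℝ) - 1) ^ n ∧
      D = N₀ * ((n : ℝ) - 1) ^ (n - 2) * (12 + (b + 2) * n * ((n : ℝ) - 3) / 2) ∧
      D - ((n : ℝ) * ((n : ℝ) - 3) / (2 * ((n : ℝ) - 1) ^ 2)) * C =
        12 * N₀ * ((n : ℝ) - 1) ^ (n - 2) := by
  obtain ⟨m, rfl⟩ : ∃ m, n = m + 2 := ⟨n - 2, by omega⟩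
  have hHpoly : H = Polynomial.C (N₀ / (m + 2)!) * scaledHilbertPoly (m + 2) b :=
    eq_of_eval_natCast_eq fun k => by
      rw [hH, eval_C_mul, eval_scaledHilbertPoly]
      field_simp
  rw [hHpoly, coeff_C_mul, coeff_scaledHilbertPoly_self] at hC
  rw [hHpoly, Nat.add_sub_cancel, coeff_C_mul, coeff_scaledHilbertPoly_sub_two] at hD
  have hfact : ((m + 2)! : ℝ) = (m + 2) * (m + 1) * m ! := by
    push_cast [factorial_succ]; ring
  have hm : ((m + 2 : ℕ) : ℝ) - 1 = m + 1 := by push_cast; ring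
  rw [hm, hfact] at hC hD
  have hCval : C = N₀ * (b + 2) * (m + 1) ^ (m + 2) := by
    field_simp at hC
    linear_combination -hC
  have hDval : D = N₀ * (m + 1) ^ m * (12 + (b + 2) * (m + 2) * (m - 1) / 2) := by
    field_simp at hD
    linear_combination (-1 / 24) * hD - hCval
  rw [Nat.add_sub_cancel, hm, hCval, hDval]
  push_cast
  refine ⟨rfl, by ring, ?_⟩
  field_simp
  ring

theorem stmt13 (n : ℕ) (hn : 2 ≤ n) (N₀ b C D : ℝ) (hN₀ : N₀ ≠ 0) (H : Polynomial ℝ)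
    (hH : ∀ k : ℕ, H.eval (k : ℝ) =
      N₀ * (((n + k - 2).choose n : ℝ) + b * ((n + k - 1).choose n : ℝ) + ((n + k).choose n : ℝ)))
    (hC : H.coeff n = C / (((n : ℝ) - 1) ^ n * n.factorial))
    (hD : H.coeff (n - 2) = (C + D) / (12 * ((n : ℝ) - 1) ^ (n - 2) * (n - 2).factorial)) :
    C = N₀ * (b + 2) * ((n : ℝ) - 1) ^ n ∧
      D = N₀ * ((n : ℝ) - 1) ^ (n - 2) * (12 + (b + 2) * n * ((n : ℝ) - 3) / 2) ∧
      D - ((n : ℝ) * ((n : ℝ) - 3) / (2 * ((n : ℝ) - 1) ^ 2)) * C =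
        12 * N₀ * ((n : ℝ) - 1) ^ (n - 2) :=
  stmt13_general n hn N₀ b C D H hH hC hD
end
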